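/- Suppose the external power P_𝔟^ext(h, υ) = ∫_𝔟 (b·h + β·υ) dx + ∫_{∂𝔟} (Pn·h + Sn·υ) dH² is invariant under semi-classical observer changes h* = h + c + q×x, υ* = υ + 𝒜(ν)q for all c, q ∈ ℝ³ and all parts 𝔟. Then for every part 𝔟: ∫_𝔟 (𝒜*β) dx + ∫_{∂𝔟} (𝒜* S n) dH² + ∫_𝔟 (x−x₀)×b dx + ∫_{∂𝔟} (x−x₀)×(Pn) dH² = 0, i.e., the generalized torque balance (4) of the paper holds. -/
import Mathlib


open MeasureTheory Matrix

/-- Dot product with a fixed vector commutes with the Bochner integral. -/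
lemma integral_dot_comm {α : Type*} [MeasurableSpace α] {μ : Measure α} {k : ℕ}
    (q : Fin k → ℝ) {f : α → Fin k → ℝ} (hf : Integrable f μ) :
    ∫ x, q ⬝ᵥ f x ∂μ = q ⬝ᵥ ∫ x, f x ∂μ := by
  let L : (Fin k → ℝ) →L[ℝ] ℝ := LinearMap.toContinuousLinearMap
    { toFun := fun v => q ⬝ᵥ v
      map_add' := fun u v => dotProduct_add q u v
      map_smul' := fun c v => by simp [dotProduct_smul] }
  exact L.integral_comp_comm hf

lemma integrable_dot {α : Type*} [MeasurableSpace α] {μ : Measure α} {k : ℕ}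
    (q : Fin k → ℝ) {f : α → Fin k → ℝ} (hf : Integrable f μ) :
    Integrable (fun x => q ⬝ᵥ f x) μ := by
  let L : (Fin k → ℝ) →L[ℝ] ℝ := LinearMap.toContinuousLinearMap
    { toFun := fun v => q ⬝ᵥ v
      map_add' := fun u v => dotProduct_add q u v
      map_smul' := fun c v => by simp [dotProduct_smul] }
  exact L.integrable_comp hf

lemma ptw {N : ℕ} (q x x₀ bx : Fin 3 → ℝ) (Ax : Matrix (Fin N) (Fin 3) ℝ) (βx : Fin N → ℝ) :
    bx ⬝ᵥ ((0 : Fin 3 → ℝ) + -(crossProduct q x₀) + crossProduct q x)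
      + βx ⬝ᵥ ((0 : Fin N → ℝ) + Ax.mulVec q)
    = q ⬝ᵥ (crossProduct (x - x₀) bx + Axᵀ.mulVec βx) := by
  have h1 : (0 : Fin 3 → ℝ) + -(crossProduct q x₀) + crossProduct q x
      = crossProduct q (x - x₀) := by
    rw [map_sub]; abel
  have h2 : βx ⬝ᵥ ((0 : Fin N → ℝ) + Ax.mulVec q) = q ⬝ᵥ Axᵀ.mulVec βx := by
    rw [zero_add, Matrix.dotProduct_mulVec, ← Matrix.mulVec_transpose,
      dotProduct_comm]
  rw [h1, h2, dotProduct_add, triple_product_permutation bx q (x - x₀)]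


/-- invariance of the external power
`P_𝔟^ext(h,υ) = ∫_𝔟 (b·h + β·υ) dx + ∫_{∂𝔟} (Pn·h + Sn·υ) dH²`
under the semi-classical changes of observer `h* = h + c + q×x`, `υ* = υ + 𝒜(ν) q`
implies, on every part `𝔟`, the generalized torque balance
`∫_𝔟 𝒜*β + ∫_{∂𝔟} 𝒜*Sn + ∫_𝔟 (x−x₀)×b + ∫_{∂𝔟} (x−x₀)×Pn = 0`.
The cotangent-space values of `β` and of `Sn` are modelled through an isometric
embedding in `ℝᴺ`, `𝒜(ν(x))` is the matrix `A x : ℝ³ → ℝᴺ`, and `𝒜* = Aᵀ`. -/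
theorem stmt4 (N : ℕ)
    (Parts : Set (Set (Fin 3 → ℝ)))
    (b : (Fin 3 → ℝ) → (Fin 3 → ℝ))
    (P : (Fin 3 → ℝ) → Matrix (Fin 3) (Fin 3) ℝ)
    (β : (Fin 3 → ℝ) → (Fin N → ℝ))
    (S : (Fin 3 → ℝ) → Matrix (Fin N) (Fin 3) ℝ)
    (A : (Fin 3 → ℝ) → Matrix (Fin N) (Fin 3) ℝ)   -- x ↦ 𝒜(ν(x))
    (n : Set (Fin 3 → ℝ) → (Fin 3 → ℝ) → (Fin 3 → ℝ))
    (x₀ : Fin 3 → ℝ)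
    (hbInt : ∀ 𝔟 ∈ Parts, IntegrableOn b 𝔟 volume)
    (hbTorqInt : ∀ 𝔟 ∈ Parts,
      IntegrableOn (fun x => crossProduct (x - x₀) (b x)) 𝔟 volume)
    (hβInt : ∀ 𝔟 ∈ Parts, IntegrableOn (fun x => (A x)ᵀ.mulVec (β x)) 𝔟 volume)
    (htInt : ∀ 𝔟 ∈ Parts,
      IntegrableOn (fun x => (P x).mulVec (n 𝔟 x)) (frontier 𝔟) (μH[2]))
    (htTorqInt : ∀ 𝔟 ∈ Parts,
      IntegrableOn (fun x => crossProduct (x - x₀) ((P x).mulVec (n 𝔟 x)))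
        (frontier 𝔟) (μH[2]))
    (hSInt : ∀ 𝔟 ∈ Parts,
      IntegrableOn (fun x => (A x)ᵀ.mulVec ((S x).mulVec (n 𝔟 x)))
        (frontier 𝔟) (μH[2]))
    -- invariance of the external power under semi-classical changes in observers
    (hinv : ∀ 𝔟 ∈ Parts, ∀ h : (Fin 3 → ℝ) → (Fin 3 → ℝ),
      ∀ υ : (Fin 3 → ℝ) → (Fin N → ℝ), ∀ c q : Fin 3 → ℝ,
      ((∫ x in 𝔟, (b x ⬝ᵥ h x + β x ⬝ᵥ υ x)) +
       (∫ x in frontier 𝔟,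
          ((P x).mulVec (n 𝔟 x) ⬝ᵥ h x +
            ((S x).mulVec (n 𝔟 x)) ⬝ᵥ υ x) ∂(μH[2]))) =
      ((∫ x in 𝔟,
          (b x ⬝ᵥ (h x + c + crossProduct q x) +
            β x ⬝ᵥ (υ x + (A x).mulVec q))) +
       (∫ x in frontier 𝔟,
          ((P x).mulVec (n 𝔟 x) ⬝ᵥ (h x + c + crossProduct q x) +
            ((S x).mulVec (n 𝔟 x)) ⬝ᵥ (υ x + (A x).mulVec q)) ∂(μH[2])))) :
    ∀ 𝔟 ∈ Parts,
      (∫ x in 𝔟, (A x)ᵀ.mulVec (β x)) +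
      (∫ x in frontier 𝔟, (A x)ᵀ.mulVec ((S x).mulVec (n 𝔟 x)) ∂(μH[2])) +
      (∫ x in 𝔟, crossProduct (x - x₀) (b x)) +
      (∫ x in frontier 𝔟,
        crossProduct (x - x₀) ((P x).mulVec (n 𝔟 x)) ∂(μH[2])) = 0 := by
  intro 𝔟 h𝔟
  have hq : ∀ q : Fin 3 → ℝ,
      q ⬝ᵥ ((∫ x in 𝔟, (A x)ᵀ.mulVec (β x)) +
        (∫ x in frontier 𝔟, (A x)ᵀ.mulVec ((S x).mulVec (n 𝔟 x)) ∂(μH[2])) +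
        (∫ x in 𝔟, crossProduct (x - x₀) (b x)) +
        (∫ x in frontier 𝔟,
          crossProduct (x - x₀) ((P x).mulVec (n 𝔟 x)) ∂(μH[2]))) = 0 := by
    intro q
    have key2 : (0 : ℝ) =
        (∫ x in 𝔟, (q ⬝ᵥ crossProduct (x - x₀) (b x) + q ⬝ᵥ (A x)ᵀ.mulVec (β x))) +
        (∫ x in frontier 𝔟,
          (q ⬝ᵥ crossProduct (x - x₀) ((P x).mulVec (n 𝔟 x)) +
            q ⬝ᵥ (A x)ᵀ.mulVec ((S x).mulVec (n 𝔟 x))) ∂(μH[2])) := by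
      calc (0 : ℝ)
          = (∫ x in 𝔟,
              (b x ⬝ᵥ (fun _ : Fin 3 → ℝ => (0 : Fin 3 → ℝ)) x +
                β x ⬝ᵥ (fun _ : Fin 3 → ℝ => (0 : Fin N → ℝ)) x)) +
            (∫ x in frontier 𝔟,
              ((P x).mulVec (n 𝔟 x) ⬝ᵥ (fun _ : Fin 3 → ℝ => (0 : Fin 3 → ℝ)) x +
                ((S x).mulVec (n 𝔟 x)) ⬝ᵥ (fun _ : Fin 3 → ℝ => (0 : Fin N → ℝ)) x)
              ∂(μH[2])) := by simp
        _ = (∫ x in 𝔟,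
              (b x ⬝ᵥ ((fun _ : Fin 3 → ℝ => (0 : Fin 3 → ℝ)) x + -(crossProduct q x₀) +
                  crossProduct q x) +
                β x ⬝ᵥ ((fun _ : Fin 3 → ℝ => (0 : Fin N → ℝ)) x + (A x).mulVec q))) +
            (∫ x in frontier 𝔟,
              ((P x).mulVec (n 𝔟 x) ⬝ᵥ ((fun _ : Fin 3 → ℝ => (0 : Fin 3 → ℝ)) x +
                  -(crossProduct q x₀) + crossProduct q x) +
                ((S x).mulVec (n 𝔟 x)) ⬝ᵥ ((fun _ : Fin 3 → ℝ => (0 : Fin N → ℝ)) x +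
                  (A x).mulVec q)) ∂(μH[2])) :=
            hinv 𝔟 h𝔟 (fun _ => 0) (fun _ => 0) (-(crossProduct q x₀)) q
        _ = _ := by
            congr 1
            · exact integral_congr_ae (Filter.Eventually.of_forall fun x =>
                (ptw q x x₀ (b x) (A x) (β x)).trans (dotProduct_add q _ _))
            · exact integral_congr_ae (Filter.Eventually.of_forall fun x =>
                (ptw q x x₀ ((P x).mulVec (n 𝔟 x)) (A x) ((S x).mulVec (n 𝔟 x))).trans
                  (dotProduct_add q _ _))
    rw [integral_add (integrable_dot q (hbTorqInt 𝔟 h𝔟)) (integrable_dot q (hβInt 𝔟 h𝔟)),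
      integral_add (integrable_dot q (htTorqInt 𝔟 h𝔟)) (integrable_dot q (hSInt 𝔟 h𝔟)),
      integral_dot_comm q (hbTorqInt 𝔟 h𝔟), integral_dot_comm q (hβInt 𝔟 h𝔟),
      integral_dot_comm q (htTorqInt 𝔟 h𝔟), integral_dot_comm q (hSInt 𝔟 h𝔟)] at key2
    simp only [dotProduct_add]
    linarith [key2]
  exact dotProduct_self_eq_zero.mp (hq _)
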